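/- Fix m, β > 0, λ₀ ∈ ℝ, λ₁ ∈ ℝ ∖ ℤ, and set λ̃ = λ₀ + λ₁. Let x_L < a_x < x_R be real numbers. For real s let θ_s be the unique real number with sinh θ_s = 2πs/(mβ), and put v_s = e^{θ_s}. Then v_l ≠ v_n for all l ∈ ℤ + λ̃ and n ∈ ℤ + λ₀, and the double family indexed by (l, n) ∈ (ℤ + λ̃) × (ℤ + λ₀) with terms | e^{−m(x_R − a_x) cosh θ_l + m(x_L − a_x) cosh θ_n} · v_l^{λ₁ + 1/2} v_n^{−λ₁ + 1/2} / ((v_l − v_n) cosh θ_n) |² is summable. -/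
import Mathlib


/-- The rapidity `θ_s`, the unique real number with `sinh θ_s = 2πs/(mβ)`. -/
noncomputable def rapid (m β s : ℝ) : ℝ :=
  Real.arsinh (2 * Real.pi * s / (m * β))



private lemma abs_sinh_le_cosh3 (t : ℝ) : |Real.sinh t| ≤ Real.cosh t := by
  rcases abs_cases (Real.sinh t) with ⟨h, _⟩ | ⟨h, _⟩ <;> rw [h] <;>
    nlinarith [Real.cosh_sq t, Real.cosh_pos t]

private lemma exists_delta3 (lam₁ : ℝ) (hlam₁ : ∀ k : ℤ, lam₁ ≠ (k : ℝ)) :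
    ∃ δ : ℝ, 0 < δ ∧ ∀ j : ℤ, δ ≤ |(j : ℝ) + lam₁| := by
  set F : ℝ := lam₁ - ⌊lam₁⌋ with hF
  have hF0 : 0 < F := by
    have h1 : (⌊lam₁⌋ : ℝ) ≤ lam₁ := Int.floor_le lam₁
    rcases lt_or_eq_of_le h1 with h | h
    · linarith [h]
    · exact absurd h.symm (hlam₁ ⌊lam₁⌋)
  have hF1 : F < 1 := by
    have := Int.lt_floor_add_one lam₁; rw [hF]; linarith
  refine ⟨min F (1 - F), lt_min hF0 (by linarith), fun j => ?_⟩
  have hdecomp : (j : ℝ) + lam₁ = ((j + ⌊lam₁⌋ : ℤ) : ℝ) + F := by push_cast; ring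
  set k : ℤ := j + ⌊lam₁⌋
  rcases le_or_gt 0 k with hk | hk
  · have : (0 : ℝ) ≤ (k : ℝ) := by exact_mod_cast hk
    rw [hdecomp, abs_of_nonneg (by linarith)]
    calc min F (1 - F) ≤ F := min_le_left _ _
      _ ≤ (k : ℝ) + F := by linarith
  · have hk1 : k + 1 ≤ 0 := by omega
    have : (k : ℝ) + 1 ≤ 0 := by exact_mod_cast hk1
    rw [hdecomp, abs_of_neg (by linarith)]
    calc min F (1 - F) ≤ 1 - F := min_le_right _ _
      _ ≤ -((k : ℝ) + F) := by linarith

private lemma summable_exp_neg_abs3 (a : ℝ) (ha : 0 < a) :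
    Summable (fun l : ℤ => Real.exp (-(a * |(l : ℝ)|))) := by
  have key : Summable (fun n : ℕ => Real.exp (-(a * n))) := by
    have h : ∀ n : ℕ, Real.exp (-(a * n)) = Real.exp (-a) ^ n := by
      intro n; rw [← Real.exp_nat_mul]; ring_nf
    simp only [h]
    exact summable_geometric_of_lt_one (Real.exp_nonneg _)
      (Real.exp_lt_one_iff.2 (by linarith))
  apply Summable.of_nat_of_neg
  · exact key.congr fun n => by simp
  · exact key.congr fun n => by simp

private lemma summable_exp_neg_cosh3 (m β ε μ : ℝ) (hm : 0 < m) (hβ : 0 < β) (hε : 0 < ε) :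
    Summable (fun l : ℤ => Real.exp (-(ε * Real.cosh (rapid m β ((l : ℝ) + μ))))) := by
  set c : ℝ := 2 * Real.pi / (m * β) with hc
  have hcpos : 0 < c := div_pos (by positivity) (by positivity)
  have key : ∀ l : ℤ, Real.exp (-(ε * Real.cosh (rapid m β ((l : ℝ) + μ))))
      ≤ Real.exp (ε * c * |μ|) * Real.exp (-(ε * c * |(l : ℝ)|)) := by
    intro l
    rw [← Real.exp_add]
    apply Real.exp_le_exp.2
    have hsinh : Real.sinh (rapid m β ((l : ℝ) + μ)) = c * ((l : ℝ) + μ) := by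
      rw [rapid, Real.sinh_arsinh, hc]; field_simp
    have h1 : c * |(l : ℝ) + μ| ≤ Real.cosh (rapid m β ((l : ℝ) + μ)) := by
      have := abs_sinh_le_cosh3 (rapid m β ((l : ℝ) + μ))
      rwa [hsinh, abs_mul, abs_of_pos hcpos] at this
    have h2 : |(l : ℝ)| - |μ| ≤ |(l : ℝ) + μ| := by
      have := abs_sub_abs_le_abs_sub (l : ℝ) (-μ); simp at this; linarith [this]
    have h2' : c * (|(l : ℝ)| - |μ|) ≤ c * |(l : ℝ) + μ| :=
      mul_le_mul_of_nonneg_left h2 hcpos.le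
    have h3 : ε * (c * (|(l : ℝ)| - |μ|)) ≤ ε * Real.cosh (rapid m β ((l : ℝ) + μ)) :=
      mul_le_mul_of_nonneg_left (h2'.trans h1) hε.le
    nlinarith [h3]
  apply Summable.of_nonneg_of_le (fun l => (Real.exp_pos _).le) key
  exact ((summable_exp_neg_abs3 (ε * c) (by positivity)).mul_left _)

private lemma lin_le_cosh3 (B ε t : ℝ) (hε : 0 < ε) :
    B * |t| ≤ ε / 2 * Real.cosh t + 2 * B ^ 2 / ε := by
  have habs : |t| ≤ |Real.sinh t| := by
    rcases le_or_gt 0 t with ht | ht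
    · rw [abs_of_nonneg ht, abs_of_nonneg (Real.sinh_nonneg_iff.2 ht)]
      exact Real.self_le_sinh_iff.2 ht
    · rw [abs_of_neg ht, abs_of_neg (Real.sinh_neg_iff.2 ht)]
      have := Real.sinh_le_self_iff.2 ht.le
      linarith
  have h : t ^ 2 / 4 ≤ Real.cosh t := by
    have h : Real.cosh t = Real.cosh (t/2) ^ 2 + Real.sinh (t/2) ^ 2 := by
      rw [← Real.cosh_two_mul]; ring_nf
    have hs : (t/2) ^ 2 ≤ Real.sinh (t/2) ^ 2 := by
      have habs2 : |t/2| ≤ |Real.sinh (t/2)| := by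
        rcases le_or_gt 0 (t/2) with ht | ht
        · rw [abs_of_nonneg ht, abs_of_nonneg (Real.sinh_nonneg_iff.2 ht)]
          exact Real.self_le_sinh_iff.2 ht
        · rw [abs_of_neg ht, abs_of_neg (Real.sinh_neg_iff.2 ht)]
          have := Real.sinh_le_self_iff.2 ht.le
          linarith
      nlinarith [abs_nonneg (t/2), sq_abs (t/2), sq_abs (Real.sinh (t/2))]
    nlinarith [Real.one_le_cosh (t/2)]
  have h2 : B * |t| ≤ ε / 8 * |t| ^ 2 + 2 * B ^ 2 / ε := by
    rw [← sub_nonneg]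
    have key : 0 ≤ (ε / 8 * |t| ^ 2 + 2 * B ^ 2 / ε - B * |t|) * ε := by
      have : (ε / 8 * |t| ^ 2 + 2 * B ^ 2 / ε - B * |t|) * ε
          = ε ^ 2 / 8 * |t| ^ 2 + 2 * B ^ 2 - B * |t| * ε := by
        field_simp
      rw [this]; nlinarith [sq_nonneg (ε * |t| - 4 * B)]
    exact nonneg_of_mul_nonneg_right
      (by linarith [key] : (0:ℝ) ≤ ε * (ε / 8 * |t| ^ 2 + 2 * B ^ 2 / ε - B * |t|)) hε
  have h3 : ε / 8 * |t| ^ 2 ≤ ε / 2 * Real.cosh t := by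
    rw [sq_abs]; nlinarith
  linarith

private lemma div_exp_neg3 (N S d : ℝ) (hd : d ≠ 0) :
    N / (d * Real.exp (-S)) = N * Real.exp S / d := by
  rw [Real.exp_neg]
  field_simp

private lemma pointwise3 (θ φ ε₁ ε₂ lam₁ cδ a1 : ℝ)
    (hε₁ : 0 < ε₁) (hε₂ : 0 < ε₂) (hcδ : 0 < cδ)
    (hdiff : cδ ≤ |Real.sinh θ - Real.sinh φ|)
    (ha1 : a1 = -(ε₁ * Real.cosh θ) - ε₂ * Real.cosh φ) :
    |Real.exp a1 * Real.exp ((lam₁ + 1 / 2) * θ) * Real.exp ((-lam₁ + 1 / 2) * φ)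
      / ((Real.exp θ - Real.exp φ) * Real.cosh φ)| ^ 2
    ≤ (Real.exp (2 * (|lam₁| + 3 / 2) ^ 2 / ε₁ + 2 * (|lam₁| + 3 / 2) ^ 2 / ε₂) / cδ) ^ 2
      * (Real.exp (-(ε₁ * Real.cosh θ)) * Real.exp (-(ε₂ * Real.cosh φ))) := by
  have hid : (Real.exp θ - Real.exp φ) * (1 + Real.exp (-θ) * Real.exp (-φ))
      = 2 * (Real.sinh θ - Real.sinh φ) := by
    rw [Real.sinh_eq, Real.sinh_eq, Real.exp_neg, Real.exp_neg]
    field_simp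
    ring
  have hone : (0 : ℝ) < 1 + Real.exp (-θ) * Real.exp (-φ) := by positivity
  have habs : 2 * cδ ≤ |Real.exp θ - Real.exp φ| * (1 + Real.exp (-θ) * Real.exp (-φ)) := by
    have h0 : |Real.exp θ - Real.exp φ| * (1 + Real.exp (-θ) * Real.exp (-φ))
        = |2 * (Real.sinh θ - Real.sinh φ)| := by
      rw [← hid, abs_mul, abs_of_pos hone]
    rw [h0, abs_mul, abs_of_pos (by norm_num : (0:ℝ) < 2)]
    linarith
  have hub : 1 + Real.exp (-θ) * Real.exp (-φ) ≤ 2 * Real.exp (|θ| + |φ|) := by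
    have e1 : Real.exp (-θ) ≤ Real.exp |θ| := Real.exp_le_exp.2 (neg_le_abs θ)
    have e2 : Real.exp (-φ) ≤ Real.exp |φ| := Real.exp_le_exp.2 (neg_le_abs φ)
    have e3 : (1 : ℝ) ≤ Real.exp (|θ| + |φ|) := Real.one_le_exp (by positivity)
    have e4 : Real.exp (-θ) * Real.exp (-φ) ≤ Real.exp (|θ| + |φ|) := by
      rw [Real.exp_add]
      exact mul_le_mul e1 e2 (Real.exp_pos _).le (Real.exp_pos _).le
    linarith
  have hden : cδ * Real.exp (-(|θ| + |φ|)) ≤ |Real.exp θ - Real.exp φ| := by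
    have h5 : cδ ≤ |Real.exp θ - Real.exp φ| * Real.exp (|θ| + |φ|) := by
      nlinarith [mul_le_mul_of_nonneg_left hub (abs_nonneg (Real.exp θ - Real.exp φ))]
    calc cδ * Real.exp (-(|θ| + |φ|))
        ≤ (|Real.exp θ - Real.exp φ| * Real.exp (|θ| + |φ|)) * Real.exp (-(|θ| + |φ|)) :=
          mul_le_mul_of_nonneg_right h5 (Real.exp_pos _).le
      _ = |Real.exp θ - Real.exp φ| * Real.exp ((|θ| + |φ|) + -(|θ| + |φ|)) := by
          rw [mul_assoc, ← Real.exp_add]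
      _ = |Real.exp θ - Real.exp φ| := by
          rw [show (|θ| + |φ|) + -(|θ| + |φ|) = 0 by ring, Real.exp_zero, mul_one]
  have habsT : |Real.exp a1 * Real.exp ((lam₁ + 1 / 2) * θ) * Real.exp ((-lam₁ + 1 / 2) * φ)
      / ((Real.exp θ - Real.exp φ) * Real.cosh φ)|
      = Real.exp (a1 + (lam₁ + 1 / 2) * θ + (-lam₁ + 1 / 2) * φ)
        / (|Real.exp θ - Real.exp φ| * Real.cosh φ) := by
    rw [abs_div, abs_mul, abs_mul, abs_mul, Real.abs_exp, Real.abs_exp, Real.abs_exp,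
      abs_of_pos (Real.cosh_pos φ), Real.exp_add, Real.exp_add]
  have hcosh1 : 1 ≤ Real.cosh φ := Real.one_le_cosh φ
  have hstep1 : Real.exp (a1 + (lam₁ + 1 / 2) * θ + (-lam₁ + 1 / 2) * φ)
      / (|Real.exp θ - Real.exp φ| * Real.cosh φ)
      ≤ Real.exp (a1 + (lam₁ + 1 / 2) * θ + (-lam₁ + 1 / 2) * φ + (|θ| + |φ|)) / cδ := by
    have hd2 : cδ * Real.exp (-(|θ| + |φ|)) ≤ |Real.exp θ - Real.exp φ| * Real.cosh φ :=
      hden.trans (le_mul_of_one_le_right (abs_nonneg _) hcosh1)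
    have h6 : Real.exp (a1 + (lam₁ + 1 / 2) * θ + (-lam₁ + 1 / 2) * φ)
        / (|Real.exp θ - Real.exp φ| * Real.cosh φ)
        ≤ Real.exp (a1 + (lam₁ + 1 / 2) * θ + (-lam₁ + 1 / 2) * φ)
          / (cδ * Real.exp (-(|θ| + |φ|))) := by
      apply div_le_div_of_nonneg_left (Real.exp_pos _).le (by positivity) hd2
    refine h6.trans (le_of_eq ?_)
    rw [div_exp_neg3 _ _ _ hcδ.ne', ← Real.exp_add]
  have hexp : a1 + (lam₁ + 1 / 2) * θ + (-lam₁ + 1 / 2) * φ + (|θ| + |φ|)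
      ≤ (2 * (|lam₁| + 3 / 2) ^ 2 / ε₁ + 2 * (|lam₁| + 3 / 2) ^ 2 / ε₂)
        + (-(ε₁ / 2 * Real.cosh θ) + -(ε₂ / 2 * Real.cosh φ)) := by
    have h6 := lin_le_cosh3 (|lam₁| + 3 / 2) ε₁ θ hε₁
    have h7 := lin_le_cosh3 (|lam₁| + 3 / 2) ε₂ φ hε₂
    have h8 : (lam₁ + 1 / 2) * θ ≤ (|lam₁| + 1 / 2) * |θ| := by
      calc (lam₁ + 1 / 2) * θ ≤ |(lam₁ + 1 / 2) * θ| := le_abs_self _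
        _ = |lam₁ + 1 / 2| * |θ| := abs_mul _ _
        _ ≤ (|lam₁| + 1 / 2) * |θ| := by
            apply mul_le_mul_of_nonneg_right _ (abs_nonneg θ)
            calc |lam₁ + 1 / 2| ≤ |lam₁| + |(1:ℝ) / 2| := abs_add_le _ _
              _ = |lam₁| + 1 / 2 := by norm_num
    have h9 : (-lam₁ + 1 / 2) * φ ≤ (|lam₁| + 1 / 2) * |φ| := by
      calc (-lam₁ + 1 / 2) * φ ≤ |(-lam₁ + 1 / 2) * φ| := le_abs_self _
        _ = |-lam₁ + 1 / 2| * |φ| := abs_mul _ _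
        _ ≤ (|lam₁| + 1 / 2) * |φ| := by
            apply mul_le_mul_of_nonneg_right _ (abs_nonneg φ)
            calc |-lam₁ + 1 / 2| ≤ |-lam₁| + |(1:ℝ) / 2| := abs_add_le _ _
              _ = |lam₁| + 1 / 2 := by rw [abs_neg]; norm_num
    rw [ha1]
    nlinarith [abs_nonneg θ, abs_nonneg φ]
  have hmain : |Real.exp a1 * Real.exp ((lam₁ + 1 / 2) * θ) * Real.exp ((-lam₁ + 1 / 2) * φ)
      / ((Real.exp θ - Real.exp φ) * Real.cosh φ)|
      ≤ (Real.exp (2 * (|lam₁| + 3 / 2) ^ 2 / ε₁ + 2 * (|lam₁| + 3 / 2) ^ 2 / ε₂) / cδ)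
        * Real.exp (-(ε₁ / 2 * Real.cosh θ)) * Real.exp (-(ε₂ / 2 * Real.cosh φ)) := by
    rw [habsT]
    refine hstep1.trans ?_
    have h10 : Real.exp (a1 + (lam₁ + 1 / 2) * θ + (-lam₁ + 1 / 2) * φ + (|θ| + |φ|))
        ≤ Real.exp (2 * (|lam₁| + 3 / 2) ^ 2 / ε₁ + 2 * (|lam₁| + 3 / 2) ^ 2 / ε₂)
          * Real.exp (-(ε₁ / 2 * Real.cosh θ)) * Real.exp (-(ε₂ / 2 * Real.cosh φ)) := by
      rw [← Real.exp_add, ← Real.exp_add]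
      exact Real.exp_le_exp.2 (by linarith [hexp])
    calc Real.exp (a1 + (lam₁ + 1 / 2) * θ + (-lam₁ + 1 / 2) * φ + (|θ| + |φ|)) / cδ
        ≤ (Real.exp (2 * (|lam₁| + 3 / 2) ^ 2 / ε₁ + 2 * (|lam₁| + 3 / 2) ^ 2 / ε₂)
            * Real.exp (-(ε₁ / 2 * Real.cosh θ)) * Real.exp (-(ε₂ / 2 * Real.cosh φ))) / cδ := by
          apply div_le_div_of_nonneg_right h10 hcδ.le
      _ = _ := by ring
  have hK : (0:ℝ) ≤ Real.exp (2 * (|lam₁| + 3 / 2) ^ 2 / ε₁ + 2 * (|lam₁| + 3 / 2) ^ 2 / ε₂) / cδ := by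
    positivity
  calc |Real.exp a1 * Real.exp ((lam₁ + 1 / 2) * θ) * Real.exp ((-lam₁ + 1 / 2) * φ)
      / ((Real.exp θ - Real.exp φ) * Real.cosh φ)| ^ 2
      ≤ ((Real.exp (2 * (|lam₁| + 3 / 2) ^ 2 / ε₁ + 2 * (|lam₁| + 3 / 2) ^ 2 / ε₂) / cδ)
        * Real.exp (-(ε₁ / 2 * Real.cosh θ)) * Real.exp (-(ε₂ / 2 * Real.cosh φ))) ^ 2 :=
        pow_le_pow_left₀ (abs_nonneg _) hmain 2
    _ = (Real.exp (2 * (|lam₁| + 3 / 2) ^ 2 / ε₁ + 2 * (|lam₁| + 3 / 2) ^ 2 / ε₂) / cδ) ^ 2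
        * ((Real.exp (-(ε₁ / 2 * Real.cosh θ)) * Real.exp (-(ε₁ / 2 * Real.cosh θ)))
          * (Real.exp (-(ε₂ / 2 * Real.cosh φ)) * Real.exp (-(ε₂ / 2 * Real.cosh φ)))) := by
        ring
    _ = _ := by
        have e1' : Real.exp (-(ε₁ / 2 * Real.cosh θ)) * Real.exp (-(ε₁ / 2 * Real.cosh θ))
            = Real.exp (-(ε₁ * Real.cosh θ)) := by
          rw [← Real.exp_add]; congr 1; ring
        have e2' : Real.exp (-(ε₂ / 2 * Real.cosh φ)) * Real.exp (-(ε₂ / 2 * Real.cosh φ))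
            = Real.exp (-(ε₂ * Real.cosh φ)) := by
          rw [← Real.exp_add]; congr 1; ring
        rw [e1', e2']

/-- For `λ₁ ∉ ℤ` and `x_L < a_x < x_R`, one has `v_l ≠ v_n` for
`l ∈ ℤ + λ̃`, `n ∈ ℤ + λ₀` (where `λ̃ = λ₀ + λ₁`, `v_s = e^{θ_s}`), and the doubly indexed
family `|e^{−m(x_R−a_x)cosh θ_l + m(x_L−a_x)cosh θ_n} v_l^{λ₁+1/2} v_n^{−λ₁+1/2}
/ ((v_l − v_n) cosh θ_n)|²` is summable: the operator `β̂` is Hilbert–Schmidt. -/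
theorem beta_operator_hilbert_schmidt
    (m β lam₀ lam₁ : ℝ) (hm : 0 < m) (hβ : 0 < β)
    (hlam₁ : ∀ k : ℤ, lam₁ ≠ (k : ℝ))
    (xL ax xR : ℝ) (h₁ : xL < ax) (h₂ : ax < xR) :
    (∀ l n : ℤ,
      Real.exp (rapid m β ((l : ℝ) + (lam₀ + lam₁))) ≠ Real.exp (rapid m β ((n : ℝ) + lam₀))) ∧
    Summable (fun p : ℤ × ℤ =>
      |Real.exp (-(m * (xR - ax) * Real.cosh (rapid m β ((p.1 : ℝ) + (lam₀ + lam₁))))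
          + m * (xL - ax) * Real.cosh (rapid m β ((p.2 : ℝ) + lam₀)))
        * Real.exp ((lam₁ + 1 / 2) * rapid m β ((p.1 : ℝ) + (lam₀ + lam₁)))
        * Real.exp ((-lam₁ + 1 / 2) * rapid m β ((p.2 : ℝ) + lam₀))
        / ((Real.exp (rapid m β ((p.1 : ℝ) + (lam₀ + lam₁)))
            - Real.exp (rapid m β ((p.2 : ℝ) + lam₀)))
          * Real.cosh (rapid m β ((p.2 : ℝ) + lam₀)))| ^ 2) := by
  have hc0 : 0 < 2 * Real.pi / (m * β) := div_pos (by positivity) (by positivity)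
  set c : ℝ := 2 * Real.pi / (m * β) with hc
  have hs : ∀ s : ℝ, Real.sinh (rapid m β s) = c * s := fun s => by
    rw [rapid, Real.sinh_arsinh, hc]; field_simp
  obtain ⟨δ, hδ, hδle⟩ := exists_delta3 lam₁ hlam₁
  constructor
  · intro l n h
    have hθφ : rapid m β ((l : ℝ) + (lam₀ + lam₁)) = rapid m β ((n : ℝ) + lam₀) :=
      Real.exp_eq_exp.mp h
    have h2 : c * ((l : ℝ) + (lam₀ + lam₁)) = c * ((n : ℝ) + lam₀) := by
      rw [← hs, ← hs, hθφ]
    have h3 : (l : ℝ) + lam₁ = (n : ℝ) := by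
      have := mul_left_cancel₀ hc0.ne' h2; linarith
    exact hlam₁ (n - l) (by push_cast; linarith)
  · have hε₁ : 0 < m * (xR - ax) := mul_pos hm (by linarith)
    have hε₂ : 0 < m * (ax - xL) := mul_pos hm (by linarith)
    have hF := summable_exp_neg_cosh3 m β (m * (xR - ax)) (lam₀ + lam₁) hm hβ hε₁
    have hG := summable_exp_neg_cosh3 m β (m * (ax - xL)) lam₀ hm hβ hε₂
    have hFG := hF.mul_of_nonneg hG (fun _ => (Real.exp_pos _).le) (fun _ => (Real.exp_pos _).le)
    apply Summable.of_nonneg_of_le (fun p => sq_nonneg _) ?_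
      (hFG.mul_left ((Real.exp (2 * (|lam₁| + 3 / 2) ^ 2 / (m * (xR - ax))
        + 2 * (|lam₁| + 3 / 2) ^ 2 / (m * (ax - xL))) / (c * δ)) ^ 2))
    intro p
    refine pointwise3 _ _ (m * (xR - ax)) (m * (ax - xL)) lam₁ (c * δ) _
      hε₁ hε₂ (by positivity) ?_ (by ring)
    rw [hs, hs]
    have heq : c * ((p.1 : ℝ) + (lam₀ + lam₁)) - c * ((p.2 : ℝ) + lam₀)
        = c * (((p.1 - p.2 : ℤ) : ℝ) + lam₁) := by push_cast; ring
    rw [heq, abs_mul, abs_of_pos hc0]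
    exact mul_le_mul_of_nonneg_left (hδle _) hc0.le
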